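/- Let n be a positive integer, θ ∈ (0,1), and let u be a classical solution of (CH_n) on [0,T); fix T₀ ∈ (0,T) and set M := sup over t ∈ [0,T₀] of (‖u(t,·)‖_∞ + ‖u_x(t,·)‖_∞). For each positive integer N let φ_N(x) = 1 for x ≤ 0, e^{θx} for 0 < x < N, and e^{θN} for x ≥ N. Then there exists a constant c > 0, depending only on n, θ and M, such that for every positive integer N and every t ∈ [0,T₀]: sup_x |φ_N(x) F_t(x)| ≤ c(sup_x |φ_N(x) u(t,x)| + sup_x |φ_N(x) u_x(t,x)|) and sup_x |φ_N(x) ∂_x F_t(x)| ≤ c(sup_x |φ_N(x) u(t,x)| + sup_x |φ_N(x) u_x(t,x)|). -/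

import Mathlib

open Real MeasureTheory Filter Topology
open scoped ENNReal

/-- The Green function `g(x) = e^{-|x|}/2` of `1 - ∂ₓ²` on `ℝ`. -/
noncomputable def g (x : ℝ) : ℝ := Real.exp (-|x|) / 2

/-- `u_x`. -/
noncomputable def ux (u : ℝ → ℝ → ℝ) (t x : ℝ) : ℝ := deriv (u t) x
/-- `u_{xx}`. -/
noncomputable def uxx (u : ℝ → ℝ → ℝ) (t x : ℝ) : ℝ := deriv (deriv (u t)) x
/-- `u_{xxx}`. -/
noncomputable def uxxx (u : ℝ → ℝ → ℝ) (t x : ℝ) : ℝ := deriv (deriv (deriv (u t))) x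
/-- `u_t`. -/
noncomputable def ut (u : ℝ → ℝ → ℝ) (t x : ℝ) : ℝ := deriv (fun s => u s x) t
/-- `u_{tx}`. -/
noncomputable def utx (u : ℝ → ℝ → ℝ) (t x : ℝ) : ℝ := deriv (fun s => ux u s x) t
/-- `u_{txx}`. -/
noncomputable def utxx (u : ℝ → ℝ → ℝ) (t x : ℝ) : ℝ := deriv (fun s => uxx u s x) t

/-- `f_t(x) = (n/2) u^{n-1} u_x² + (n(n+3)/(2(n+1))) u^{n+1}`. -/
noncomputable def fLoc (n : ℕ) (u : ℝ → ℝ → ℝ) (t x : ℝ) : ℝ :=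
  ((n : ℝ) / 2) * u t x ^ (n - 1) * ux u t x ^ 2
    + ((n : ℝ) * ((n : ℝ) + 3) / (2 * ((n : ℝ) + 1))) * u t x ^ (n + 1)

/-- `F_t(x) = ∂ₓ (g ∗ f_t)(x)`. -/
noncomputable def FLoc (n : ℕ) (u : ℝ → ℝ → ℝ) (t x : ℝ) : ℝ :=
  deriv (fun z => ∫ y : ℝ, g (z - y) * fLoc n u t y) x

/-- The equation (CH_n) holds pointwise at `(t,x)`. -/
def CHn (n : ℕ) (u : ℝ → ℝ → ℝ) (t x : ℝ) : Prop :=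
  ut u t x - utxx u t x
      + (((n : ℝ) + 1) * ((n : ℝ) + 2) / 2) * u t x ^ n * ux u t x
    = ((n : ℝ) * ((n : ℝ) - 1) / 2) * u t x ^ (n - 2) * ux u t x ^ 3
      + 2 * (n : ℝ) * u t x ^ (n - 1) * ux u t x * uxx u t x
      + u t x ^ n * uxxx u t x

/-- The time interval `[0, T)`, where `T ∈ (0, ∞]`. -/
def timeDomain (T : ℝ≥0∞) : Set ℝ := {t : ℝ | 0 ≤ t ∧ ENNReal.ofReal t < T}

/-- A function which is bounded, integrable, square-integrable and tends to `0` at `±∞`. -/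
def Decays (w : ℝ → ℝ) : Prop :=
  (∃ C : ℝ, ∀ x : ℝ, |w x| ≤ C) ∧ Integrable w ∧
    Integrable (fun x => w x ^ 2) ∧ Tendsto w (cocompact ℝ) (𝓝 0)

/-- A classical solution of (CH_n) on `[0,T) × ℝ`. -/
structure IsClassicalSolution (n : ℕ) (T : ℝ≥0∞) (u : ℝ → ℝ → ℝ) : Prop where
  contDiff_x : ∀ t ∈ timeDomain T, ContDiff ℝ 3 (u t)
  diff_t : ∀ x : ℝ, ∀ t ∈ timeDomain T, DifferentiableAt ℝ (fun s => u s x) t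
  diff_tx : ∀ x : ℝ, ∀ t ∈ timeDomain T, DifferentiableAt ℝ (fun s => ux u s x) t
  diff_txx : ∀ x : ℝ, ∀ t ∈ timeDomain T, DifferentiableAt ℝ (fun s => uxx u s x) t
  cont_ut : ContinuousOn (fun p : ℝ × ℝ => ut u p.1 p.2) (timeDomain T ×ˢ Set.univ)
  cont_utx : ContinuousOn (fun p : ℝ × ℝ => utx u p.1 p.2) (timeDomain T ×ˢ Set.univ)
  cont_utxx : ContinuousOn (fun p : ℝ × ℝ => utxx u p.1 p.2) (timeDomain T ×ˢ Set.univ)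
  pde : ∀ t ∈ timeDomain T, ∀ x : ℝ, CHn n u t x
  nonlocal : ∀ t ∈ timeDomain T, ∀ x : ℝ,
    ut u t x + u t x ^ n * ux u t x + FLoc n u t x = 0
  decay_u : ∀ t ∈ timeDomain T, Decays (u t)
  decay_ux : ∀ t ∈ timeDomain T, Decays (ux u t)
  decay_uxx : ∀ t ∈ timeDomain T, Decays (uxx u t)
  decay_ut : ∀ t ∈ timeDomain T, Decays (ut u t)
  sup_bound : ∀ T₀ ∈ timeDomain T, ∃ M : ℝ, ∀ t ∈ Set.Icc (0 : ℝ) T₀, ∀ x : ℝ,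
    |u t x| + |ux u t x| ≤ M

/-- The cutoff weight `φ_N`. -/
noncomputable def phiN (θ : ℝ) (N : ℕ) (x : ℝ) : ℝ :=
  if x ≤ 0 then 1 else if x < N then Real.exp (θ * x) else Real.exp (θ * N)

/-!
Splitting the convolution at `x` gives `g ∗ f = (e^{-x} A + e^x B) / 2` with
`A x = ∫_{y ≤ x} e^y f y` and `B x = ∫_{y > x} e^{-y} f y`, so that `(g ∗ f)' = (e^x B - e^{-x} A) / 2`
and `(g ∗ f)'' = g ∗ f - f`. A nondecreasing weight `φ` with `φ x ≤ e^{θ(x-y)} φ y` for `y ≤ x`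
passes through both one-sided integrals: on the left it costs `∫_{y ≤ x} e^{-(1-θ)(x-y)} = 1/(1-θ)`,
on the right monotonicity suffices. Hence `φ |(g ∗ f)^{(k)}| ≤ 2 sup (φ |f|) / (1 - θ)` for
`k = 1, 2`. For `f = f_t` every term has degree `n + 1 ≥ 2` in `(u, u_x)`, so
`|f_t| ≤ K (|u| + |u_x|)` with `K` depending only on `n` and `M`.
-/

open Set

lemma hasDerivAt_setIntegral_Iic {w : ℝ → ℝ} (hw : Continuous w)
    (hwi : ∀ s, IntegrableOn w (Iic s)) (x : ℝ) :
    HasDerivAt (fun s => ∫ y in Iic s, w y) (w x) x := by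
  have hsplit : ∀ s, ∫ y in Iic s, w y = (∫ y in Iic 0, w y) + ∫ y in (0 : ℝ)..s, w y := fun s => by
    rw [← intervalIntegral.integral_Iic_sub_Iic (hwi 0) (hwi s), add_sub_cancel]
  rw [funext hsplit]
  exact (intervalIntegral.integral_hasDerivAt_right (hw.intervalIntegrable 0 x)
    (hw.stronglyMeasurableAtFilter _ _) hw.continuousAt).const_add _

lemma hasDerivAt_setIntegral_Ioi {w : ℝ → ℝ} (hw : Continuous w)
    (hwi : ∀ s, IntegrableOn w (Ioi s)) (x : ℝ) :
    HasDerivAt (fun s => ∫ y in Ioi s, w y) (-w x) x := by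
  have hsplit : ∀ s, ∫ y in Ioi s, w y = (∫ y in Ioi 0, w y) - ∫ y in (0 : ℝ)..s, w y := fun s => by
    rw [← intervalIntegral.integral_Ioi_sub_Ioi' (hwi 0) (hwi s), sub_sub_cancel]
  rw [funext hsplit]
  exact (intervalIntegral.integral_hasDerivAt_right (hw.intervalIntegrable 0 x)
    (hw.stronglyMeasurableAtFilter _ _) hw.continuousAt).const_sub _

section GreenConvolution

variable {f : ℝ → ℝ}

noncomputable def expIntegralIic (f : ℝ → ℝ) (x : ℝ) : ℝ := ∫ y in Iic x, exp y * f y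

noncomputable def expIntegralIoi (f : ℝ → ℝ) (x : ℝ) : ℝ := ∫ y in Ioi x, exp (-y) * f y

noncomputable def greenConv (f : ℝ → ℝ) (x : ℝ) : ℝ := ∫ y, g (x - y) * f y

/-- The convolution `g' ∗ f`, where `g'(z) = -sign(z) g(z)`. -/
noncomputable def greenDerivConv (f : ℝ → ℝ) (x : ℝ) : ℝ :=
  (exp x * expIntegralIoi f x - exp (-x) * expIntegralIic f x) / 2

lemma MeasureTheory.Integrable.integrableOn_exp_mul_Iic (hf : Integrable f) (x : ℝ) :
    IntegrableOn (fun y => exp y * f y) (Iic x) :=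
  hf.integrableOn.bdd_mul continuous_exp.aestronglyMeasurable <|
    (ae_restrict_iff' measurableSet_Iic).2 <| .of_forall fun y (hy : y ≤ x) => by
      rw [norm_eq_abs, abs_of_pos (exp_pos y)]; exact exp_le_exp.2 hy

lemma MeasureTheory.Integrable.integrableOn_exp_neg_mul_Ioi (hf : Integrable f) (x : ℝ) :
    IntegrableOn (fun y => exp (-y) * f y) (Ioi x) :=
  hf.integrableOn.bdd_mul (continuous_exp.comp continuous_neg).aestronglyMeasurable <|
    (ae_restrict_iff' measurableSet_Ioi).2 <| .of_forall fun y (hy : x < y) => by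
      rw [norm_eq_abs, abs_of_pos (exp_pos _)]; exact exp_le_exp.2 (neg_le_neg hy.le)

lemma g_sub_of_le {x y : ℝ} (h : y ≤ x) : g (x - y) = exp (-x) / 2 * exp y := by
  rw [g, abs_of_nonneg (sub_nonneg.2 h), neg_sub, sub_eq_add_neg, exp_add]; ring

lemma g_sub_of_ge {x y : ℝ} (h : x ≤ y) : g (x - y) = exp x / 2 * exp (-y) := by
  rw [g, abs_of_nonpos (sub_nonpos.2 h), neg_neg, sub_eq_add_neg, exp_add]; ring

lemma greenConv_eq (hf : Integrable f) (x : ℝ) :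
    greenConv f x = (exp (-x) * expIntegralIic f x + exp x * expIntegralIoi f x) / 2 := by
  have hIic : EqOn (fun y => g (x - y) * f y) (fun y => exp (-x) / 2 * (exp y * f y)) (Iic x) :=
    fun y hy => by dsimp only; rw [g_sub_of_le hy, mul_assoc]
  have hIoi : EqOn (fun y => g (x - y) * f y) (fun y => exp x / 2 * (exp (-y) * f y)) (Ioi x) :=
    fun y hy => by dsimp only; rw [g_sub_of_ge (le_of_lt hy), mul_assoc]
  rw [greenConv, ← intervalIntegral.integral_Iic_add_Ioi
      (IntegrableOn.congr_fun ((hf.integrableOn_exp_mul_Iic x).const_mul _) hIic.symm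
        measurableSet_Iic)
      (IntegrableOn.congr_fun ((hf.integrableOn_exp_neg_mul_Ioi x).const_mul _) hIoi.symm
        measurableSet_Ioi),
    setIntegral_congr_fun measurableSet_Iic hIic, setIntegral_congr_fun measurableSet_Ioi hIoi,
    integral_const_mul, integral_const_mul, expIntegralIic, expIntegralIoi]
  ring

lemma hasDerivAt_expIntegralIic (hc : Continuous f) (hf : Integrable f) (x : ℝ) :
    HasDerivAt (expIntegralIic f) (exp x * f x) x :=
  hasDerivAt_setIntegral_Iic (continuous_exp.mul hc) hf.integrableOn_exp_mul_Iic x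

lemma hasDerivAt_expIntegralIoi (hc : Continuous f) (hf : Integrable f) (x : ℝ) :
    HasDerivAt (expIntegralIoi f) (-(exp (-x) * f x)) x :=
  hasDerivAt_setIntegral_Ioi ((continuous_exp.comp continuous_neg).mul hc)
    hf.integrableOn_exp_neg_mul_Ioi x

lemma hasDerivAt_greenConv (hc : Continuous f) (hf : Integrable f) (x : ℝ) :
    HasDerivAt (greenConv f) (greenDerivConv f x) x := by
  rw [funext (greenConv_eq hf)]
  refine ((((hasDerivAt_neg x).exp.mul (hasDerivAt_expIntegralIic hc hf x)).add
    ((hasDerivAt_exp x).mul (hasDerivAt_expIntegralIoi hc hf x))).div_const 2).congr_deriv ?_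
  rw [greenDerivConv]; ring

lemma hasDerivAt_greenDerivConv (hc : Continuous f) (hf : Integrable f) (x : ℝ) :
    HasDerivAt (greenDerivConv f) (greenConv f x - f x) x := by
  refine ((((hasDerivAt_exp x).mul (hasDerivAt_expIntegralIoi hc hf x)).sub
    ((hasDerivAt_neg x).exp.mul (hasDerivAt_expIntegralIic hc hf x))).div_const 2).congr_deriv ?_
  rw [greenConv_eq hf, exp_neg]
  field_simp
  ring

lemma deriv_greenConv (hc : Continuous f) (hf : Integrable f) :
    deriv (greenConv f) = greenDerivConv f :=
  funext fun x => (hasDerivAt_greenConv hc hf x).deriv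

lemma deriv_greenDerivConv (hc : Continuous f) (hf : Integrable f) :
    deriv (greenDerivConv f) = fun x => greenConv f x - f x :=
  funext fun x => (hasDerivAt_greenDerivConv hc hf x).deriv

end GreenConvolution

structure IsWeightOfRate (θ : ℝ) (φ : ℝ → ℝ) : Prop where
  nonneg : ∀ x, 0 ≤ φ x
  monotone : Monotone φ
  le_exp_mul : ∀ ⦃y x⦄, y ≤ x → φ x ≤ exp (θ * (x - y)) * φ y

lemma phiN_eq_exp (θ : ℝ) (N : ℕ) (x : ℝ) : phiN θ N x = exp (θ * min (max x 0) N) := by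
  unfold phiN
  split_ifs with h₀ hN
  · rw [max_eq_right h₀, min_eq_left N.cast_nonneg, mul_zero, exp_zero]
  · rw [max_eq_left (not_le.1 h₀).le, min_eq_left hN.le]
  · rw [max_eq_left (not_le.1 h₀).le, min_eq_right (not_lt.1 hN)]

lemma phiN_isWeightOfRate {θ : ℝ} (hθ : 0 ≤ θ) (N : ℕ) : IsWeightOfRate θ (phiN θ N) where
  nonneg x := by rw [phiN_eq_exp]; positivity
  monotone x y h := by
    simp only [phiN_eq_exp]
    gcongr
  le_exp_mul y x h := by
    rw [phiN_eq_exp, phiN_eq_exp, ← exp_add, ← mul_add]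
    gcongr
    have : min (max x 0) (N : ℝ) - min (max y 0) N ≤ x - y := by
      simp only [min_def, max_def]; split_ifs <;> linarith
    linarith

lemma phiN_le_exp {θ : ℝ} (hθ : 0 ≤ θ) (N : ℕ) (x : ℝ) : phiN θ N x ≤ exp (θ * N) := by
  rw [phiN_eq_exp]
  gcongr
  exact min_le_right _ _

namespace IsWeightOfRate

variable {f φ : ℝ → ℝ} {θ D : ℝ}

lemma mul_exp_neg_mul_abs_expIntegralIic_le (hφ : IsWeightOfRate θ φ) (hθ : θ < 1)
    (hf : Integrable f) (hfD : ∀ y, φ y * |f y| ≤ D) (x : ℝ) :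
    φ x * (exp (-x) * |expIntegralIic f x|) ≤ D / (1 - θ) := by
  have hθ' : 0 < 1 - θ := sub_pos.2 hθ
  have hpointwise : ∀ y ∈ Iic x, φ x * exp (-x) * ‖exp y * f y‖
      ≤ D * exp (-((1 - θ) * x)) * exp ((1 - θ) * y) := fun y (hy : y ≤ x) =>
    calc φ x * exp (-x) * ‖exp y * f y‖
        ≤ exp (θ * (x - y)) * φ y * exp (-x) * (exp y * |f y|) := by
          rw [norm_mul, norm_of_nonneg (exp_pos y).le, norm_eq_abs]
          gcongr
          exact hφ.le_exp_mul hy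
      _ = exp (-((1 - θ) * x)) * exp ((1 - θ) * y) * (φ y * |f y|) := by
          rw [← exp_add, show -((1 - θ) * x) + (1 - θ) * y = θ * (x - y) + -x + y by ring,
            exp_add, exp_add]
          ring
      _ ≤ exp (-((1 - θ) * x)) * exp ((1 - θ) * y) * D :=
          mul_le_mul_of_nonneg_left (hfD y) (by positivity)
      _ = D * exp (-((1 - θ) * x)) * exp ((1 - θ) * y) := by ring
  calc φ x * (exp (-x) * |expIntegralIic f x|)
      ≤ ∫ y in Iic x, φ x * exp (-x) * ‖exp y * f y‖ := by
        rw [integral_const_mul, ← mul_assoc]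
        gcongr
        · exact mul_nonneg (hφ.nonneg x) (exp_pos _).le
        · rw [expIntegralIic, ← norm_eq_abs]
          exact norm_integral_le_integral_norm _
    _ ≤ ∫ y in Iic x, D * exp (-((1 - θ) * x)) * exp ((1 - θ) * y) :=
        setIntegral_mono_on ((hf.integrableOn_exp_mul_Iic x).norm.const_mul _)
          ((integrableOn_exp_mul_Iic hθ' x).const_mul _) measurableSet_Iic hpointwise
    _ = D / (1 - θ) := by
        rw [integral_const_mul, integral_exp_mul_Iic hθ', mul_assoc,
          ← mul_div_assoc, ← exp_add, neg_add_cancel, exp_zero, mul_one_div]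

lemma mul_exp_mul_abs_expIntegralIoi_le (hφ : IsWeightOfRate θ φ) (hf : Integrable f)
    (hfD : ∀ y, φ y * |f y| ≤ D) (x : ℝ) :
    φ x * (exp x * |expIntegralIoi f x|) ≤ D := by
  have hpointwise : ∀ y ∈ Ioi x, φ x * exp x * ‖exp (-y) * f y‖ ≤ D * exp x * exp (-y) :=
    fun y (hy : x < y) =>
    calc φ x * exp x * ‖exp (-y) * f y‖ = exp x * exp (-y) * (φ x * |f y|) := by
          rw [norm_mul, norm_of_nonneg (exp_pos _).le, norm_eq_abs]; ring
      _ ≤ exp x * exp (-y) * (φ y * |f y|) := by gcongr; exact hφ.monotone hy.le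
      _ ≤ exp x * exp (-y) * D := mul_le_mul_of_nonneg_left (hfD y) (by positivity)
      _ = D * exp x * exp (-y) := by ring
  calc φ x * (exp x * |expIntegralIoi f x|)
      ≤ ∫ y in Ioi x, φ x * exp x * ‖exp (-y) * f y‖ := by
        rw [integral_const_mul, ← mul_assoc]
        gcongr
        · exact mul_nonneg (hφ.nonneg x) (exp_pos _).le
        · rw [expIntegralIoi, ← norm_eq_abs]
          exact norm_integral_le_integral_norm _
    _ ≤ ∫ y in Ioi x, D * exp x * exp (-y) :=
        setIntegral_mono_on ((hf.integrableOn_exp_neg_mul_Ioi x).norm.const_mul _)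
          ((integrableOn_exp_neg_Ioi x).const_mul _) measurableSet_Ioi hpointwise
    _ = D := by
        rw [integral_const_mul, integral_exp_neg_Ioi, mul_assoc, ← exp_add,
          add_neg_cancel, exp_zero, mul_one]

lemma bound_nonneg (hφ : IsWeightOfRate θ φ) (hfD : ∀ y, φ y * |f y| ≤ D) : 0 ≤ D :=
  (mul_nonneg (hφ.nonneg 0) (abs_nonneg _)).trans (hfD 0)

lemma le_div_one_sub (hφ : IsWeightOfRate θ φ) (hθ₀ : 0 ≤ θ) (hθ : θ < 1)
    (hfD : ∀ y, φ y * |f y| ≤ D) : D ≤ D / (1 - θ) :=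
  le_div_self (hφ.bound_nonneg hfD) (by linarith) (by linarith)

lemma mul_half_sum_abs_expIntegral_le (hφ : IsWeightOfRate θ φ) (hθ₀ : 0 ≤ θ) (hθ : θ < 1)
    (hf : Integrable f) (hfD : ∀ y, φ y * |f y| ≤ D) (x : ℝ) :
    φ x * ((exp (-x) * |expIntegralIic f x| + exp x * |expIntegralIoi f x|) / 2)
      ≤ D / (1 - θ) := by
  have hIic := hφ.mul_exp_neg_mul_abs_expIntegralIic_le hθ hf hfD x
  have hIoi := hφ.mul_exp_mul_abs_expIntegralIoi_le hf hfD x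
  have hD := hφ.le_div_one_sub hθ₀ hθ hfD
  linarith [mul_add (φ x) (exp (-x) * |expIntegralIic f x|) (exp x * |expIntegralIoi f x|),
    mul_div_assoc (φ x) (exp (-x) * |expIntegralIic f x| + exp x * |expIntegralIoi f x|) 2]

lemma mul_abs_greenConv_le (hφ : IsWeightOfRate θ φ) (hθ₀ : 0 ≤ θ) (hθ : θ < 1)
    (hf : Integrable f) (hfD : ∀ y, φ y * |f y| ≤ D) (x : ℝ) :
    φ x * |greenConv f x| ≤ D / (1 - θ) := by
  refine le_trans ?_ (hφ.mul_half_sum_abs_expIntegral_le hθ₀ hθ hf hfD x)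
  rw [greenConv_eq hf, abs_div, abs_two]
  gcongr
  · exact hφ.nonneg x
  refine (abs_add_le _ _).trans_eq ?_
  rw [abs_mul, abs_mul, abs_of_pos (exp_pos _), abs_of_pos (exp_pos _)]

lemma mul_abs_greenDerivConv_le (hφ : IsWeightOfRate θ φ) (hθ₀ : 0 ≤ θ) (hθ : θ < 1)
    (hf : Integrable f) (hfD : ∀ y, φ y * |f y| ≤ D) (x : ℝ) :
    φ x * |greenDerivConv f x| ≤ D / (1 - θ) := by
  refine le_trans ?_ (hφ.mul_half_sum_abs_expIntegral_le hθ₀ hθ hf hfD x)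
  rw [greenDerivConv, abs_div, abs_two]
  gcongr
  · exact hφ.nonneg x
  refine (abs_sub _ _).trans_eq ?_
  rw [abs_mul, abs_mul, abs_of_pos (exp_pos _), abs_of_pos (exp_pos _), add_comm]

lemma mul_abs_greenConv_sub_le (hφ : IsWeightOfRate θ φ) (hθ₀ : 0 ≤ θ) (hθ : θ < 1)
    (hf : Integrable f) (hfD : ∀ y, φ y * |f y| ≤ D) (x : ℝ) :
    φ x * |greenConv f x - f x| ≤ 2 * D / (1 - θ) := by
  have hD := hφ.le_div_one_sub hθ₀ hθ hfD
  calc φ x * |greenConv f x - f x| ≤ φ x * |greenConv f x| + φ x * |f x| := by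
        rw [← mul_add]; exact mul_le_mul_of_nonneg_left (abs_sub _ _) (hφ.nonneg x)
    _ ≤ D / (1 - θ) + D := add_le_add (hφ.mul_abs_greenConv_le hθ₀ hθ hf hfD x) (hfD x)
    _ ≤ 2 * D / (1 - θ) := by rw [mul_div_assoc]; linarith

end IsWeightOfRate

lemma abs_mul_pow_mul_sq_add_mul_pow_le {n : ℕ} (hn : 0 < n) {p q a b m : ℝ}
    (hp : 0 ≤ p) (hq : 0 ≤ q) (ha : |a| ≤ m) (hb : |b| ≤ m) :
    |p * a ^ (n - 1) * b ^ 2 + q * a ^ (n + 1)| ≤ (p + q) * m ^ n * (|a| + |b|) := by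
  have hm : 0 ≤ m := (abs_nonneg a).trans ha
  have hpb : |p * a ^ (n - 1) * b ^ 2| ≤ p * m ^ n * |b| :=
    calc |p * a ^ (n - 1) * b ^ 2| = p * (|a| ^ (n - 1) * |b|) * |b| := by
          rw [abs_mul, abs_mul, abs_pow, abs_pow, abs_of_nonneg hp]; ring
      _ ≤ p * (m ^ (n - 1) * m) * |b| := by gcongr
      _ = p * m ^ n * |b| := by rw [pow_sub_one_mul hn.ne']
  have hqa : |q * a ^ (n + 1)| ≤ q * m ^ n * |a| :=
    calc |q * a ^ (n + 1)| = q * |a| ^ n * |a| := by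
          rw [abs_mul, abs_pow, abs_of_nonneg hq, pow_succ, mul_assoc]
      _ ≤ q * m ^ n * |a| := by gcongr
  have hmn : 0 ≤ m ^ n := pow_nonneg hm n
  nlinarith [abs_add_le (p * a ^ (n - 1) * b ^ 2) (q * a ^ (n + 1)), abs_nonneg a, abs_nonneg b,
    mul_nonneg (mul_nonneg hp hmn) (abs_nonneg a), mul_nonneg (mul_nonneg hq hmn) (abs_nonneg b)]

lemma abs_le_iSup_abs {w : ℝ → ℝ} {C : ℝ} (hC : ∀ x, |w x| ≤ C) (y : ℝ) :
    |w y| ≤ ⨆ x, |w x| :=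
  le_ciSup ⟨C, by rintro _ ⟨x, rfl⟩; exact hC x⟩ y

lemma iSup_abs_mul_le {φ w : ℝ → ℝ} {C : ℝ} (hφ : ∀ x, 0 ≤ φ x)
    (h : ∀ x, φ x * |w x| ≤ C) : ⨆ x, |φ x * w x| ≤ C :=
  ciSup_le fun x => by rw [abs_mul, abs_of_nonneg (hφ x)]; exact h x

lemma mul_abs_le_mul_iSup_add_iSup {φ f a b : ℝ → ℝ} {B m K : ℝ} (hφ : ∀ x, 0 ≤ φ x)
    (hφB : ∀ x, φ x ≤ B) (ha : ∀ x, |a x| ≤ m) (hb : ∀ x, |b x| ≤ m) (hK : 0 ≤ K)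
    (hf : ∀ x, |f x| ≤ K * (|a x| + |b x|)) (y : ℝ) :
    φ y * |f y| ≤ K * ((⨆ x, |φ x * a x|) + ⨆ x, |φ x * b x|) := by
  have hB : ∀ x, |φ x| ≤ B := fun x => (abs_of_nonneg (hφ x)).trans_le (hφB x)
  have hmB {c : ℝ → ℝ} (hc : ∀ x, |c x| ≤ m) (x : ℝ) : |φ x * c x| ≤ B * m :=
    (abs_mul _ _).trans_le <| mul_le_mul (hB x) (hc x) (abs_nonneg _) ((abs_nonneg _).trans (hB x))
  calc φ y * |f y| ≤ K * (|φ y * a y| + |φ y * b y|) := by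
        rw [abs_mul, abs_mul, abs_of_nonneg (hφ y), ← mul_add, mul_left_comm]
        exact mul_le_mul_of_nonneg_left (hf y) (hφ y)
    _ ≤ K * ((⨆ x, |φ x * a x|) + ⨆ x, |φ x * b x|) :=
        mul_le_mul_of_nonneg_left
          (add_le_add (abs_le_iSup_abs (hmB ha) y) (abs_le_iSup_abs (hmB hb) y)) hK

section Solution

variable {n : ℕ} {T : ℝ≥0∞} {u : ℝ → ℝ → ℝ} {t : ℝ}

lemma IsClassicalSolution.continuous_fLoc (hu : IsClassicalSolution n T u)
    (ht : t ∈ timeDomain T) : Continuous (fLoc n u t) := by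
  have hcu : Continuous (u t) := (hu.contDiff_x t ht).continuous
  have hcux : Continuous (ux u t) := (hu.contDiff_x t ht).continuous_deriv (by norm_num)
  unfold fLoc
  fun_prop

lemma abs_fLoc_le (hn : 0 < n) {m : ℝ} (hu : ∀ x, |u t x| ≤ m) (hux : ∀ x, |ux u t x| ≤ m)
    (x : ℝ) :
    |fLoc n u t x|
      ≤ ((n : ℝ) / 2 + n * (n + 3) / (2 * (n + 1))) * m ^ n * (|u t x| + |ux u t x|) :=
  abs_mul_pow_mul_sq_add_mul_pow_le hn (by positivity) (by positivity) (hu x) (hux x)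

end Solution

theorem weighted_estimates_for_nonlocal_term_general
    (n : ℕ) (hn : 0 < n) (θ : ℝ) (hθ : θ ∈ Set.Ioo (0 : ℝ) 1)
    (T : ℝ≥0∞) (u : ℝ → ℝ → ℝ) (hu : IsClassicalSolution n T u)
    (T₀ : ℝ) (hT₀T : ENNReal.ofReal T₀ < T)
    (M : ℝ) (hM : ∀ t ∈ Set.Icc (0 : ℝ) T₀, ∀ x : ℝ, |u t x| + |ux u t x| ≤ M) :
    ∃ c : ℝ, 0 < c ∧ ∀ N : ℕ, 0 < N → ∀ t ∈ Set.Icc (0 : ℝ) T₀,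
      (⨆ x : ℝ, |phiN θ N x * FLoc n u t x|)
          ≤ c * ((⨆ x : ℝ, |phiN θ N x * u t x|) + (⨆ x : ℝ, |phiN θ N x * ux u t x|)) ∧
      (⨆ x : ℝ, |phiN θ N x * deriv (FLoc n u t) x|)
          ≤ c * ((⨆ x : ℝ, |phiN θ N x * u t x|) + (⨆ x : ℝ, |phiN θ N x * ux u t x|)) := by
  obtain ⟨hθ₀, hθ₁⟩ := hθ
  set K := ((n : ℝ) / 2 + n * (n + 3) / (2 * (n + 1))) * (|M| + 1) ^ n
  have hK : 0 < K := by positivity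
  refine ⟨2 * K / (1 - θ), by have := sub_pos.2 hθ₁; positivity, fun N _ t ht => ?_⟩
  have ht' : t ∈ timeDomain T := ⟨ht.1, (ENNReal.ofReal_le_ofReal ht.2).trans_lt hT₀T⟩
  have hu_le (x : ℝ) : |u t x| ≤ |M| + 1 := by
    linarith [hM t ht x, abs_nonneg (ux u t x), le_abs_self M]
  have hux_le (x : ℝ) : |ux u t x| ≤ |M| + 1 := by
    linarith [hM t ht x, abs_nonneg (u t x), le_abs_self M]
  have hf_le := abs_fLoc_le hn hu_le hux_le
  have hf_cont := hu.continuous_fLoc ht'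
  have hf_int : Integrable (fLoc n u t) :=
    (((hu.decay_u t ht').2.1.abs.add (hu.decay_ux t ht').2.1.abs).const_mul K).mono'
      hf_cont.aestronglyMeasurable (.of_forall hf_le)
  have hφ := phiN_isWeightOfRate hθ₀.le N
  have hfD := mul_abs_le_mul_iSup_add_iSup hφ.nonneg (phiN_le_exp hθ₀.le N) hu_le hux_le
    hK.le hf_le
  have hF : FLoc n u t = greenDerivConv (fLoc n u t) := deriv_greenConv hf_cont hf_int
  rw [div_mul_eq_mul_div, mul_assoc]
  refine ⟨iSup_abs_mul_le hφ.nonneg fun x => ?_, iSup_abs_mul_le hφ.nonneg fun x => ?_⟩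
  · rw [hF]
    refine (hφ.mul_abs_greenDerivConv_le hθ₀.le hθ₁ hf_int hfD x).trans ?_
    have := hφ.bound_nonneg hfD
    exact div_le_div_of_nonneg_right (by linarith) (sub_pos.2 hθ₁).le
  · rw [hF, deriv_greenDerivConv hf_cont hf_int]
    exact hφ.mul_abs_greenConv_sub_le hθ₀.le hθ₁ hf_int hfD x

/-- The weighted estimates `‖φ_N F_t‖_∞, ‖φ_N ∂ₓF_t‖_∞ ≤
c(‖φ_N u(t)‖_∞ + ‖φ_N u_x(t)‖_∞)`, with `c` depending only on `n`, `θ` and `M`. -/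
theorem weighted_estimates_for_nonlocal_term
    (n : ℕ) (hn : 0 < n) (θ : ℝ) (hθ : θ ∈ Set.Ioo (0 : ℝ) 1)
    (T : ℝ≥0∞) (hT : 0 < T) (u : ℝ → ℝ → ℝ) (hu : IsClassicalSolution n T u)
    (T₀ : ℝ) (hT₀ : 0 < T₀) (hT₀T : ENNReal.ofReal T₀ < T)
    (M : ℝ) (hM : ∀ t ∈ Set.Icc (0 : ℝ) T₀, ∀ x : ℝ, |u t x| + |ux u t x| ≤ M) :
    ∃ c : ℝ, 0 < c ∧ ∀ N : ℕ, 0 < N → ∀ t ∈ Set.Icc (0 : ℝ) T₀,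
      (⨆ x : ℝ, |phiN θ N x * FLoc n u t x|)
          ≤ c * ((⨆ x : ℝ, |phiN θ N x * u t x|) + (⨆ x : ℝ, |phiN θ N x * ux u t x|)) ∧
      (⨆ x : ℝ, |phiN θ N x * deriv (FLoc n u t) x|)
          ≤ c * ((⨆ x : ℝ, |phiN θ N x * u t x|) + (⨆ x : ℝ, |phiN θ N x * ux u t x|)) :=
  weighted_estimates_for_nonlocal_term_general n hn θ hθ T u hu T₀ hT₀T M hM
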